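/- Let I be a graded (homogeneous) two-sided ideal of the weight ℕ-graded free algebra K⟨X⟩, and let ≺ be a monomial ordering with Gröbner basis 𝒢 of I consisting of homogeneous elements. Then every nonzero homogeneous element H ∈ K⟨X⟩_p with H ∉ I is congruent modulo I to a nonzero K-linear combination Σ_t μ_t u_t of normal words u_t ∈ N(I) all of degree p. -/

import Mathlib

open scoped Classical

/-- Words in the letters `X_1, …, X_n`: the free monoid on `Fin n`. -/
abbrev Word (n : ℕ) := FreeMonoid (Fin n)

/-- The free associative `K`-algebra `K⟨X_1,…,X_n⟩`, realised as the monoid algebra of the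
free monoid on `Fin n`. -/
abbrev FreeAlg (K : Type) [Field K] (n : ℕ) := MonoidAlgebra K (Word n)

/-- The word `v` divides the word `u` if `u = w * v * s` for some words `w, s`. -/
def WDvd {n : ℕ} (v u : Word n) : Prop := ∃ w s : Word n, u = w * v * s

/-- The monomial of `K⟨X⟩` corresponding to a word. -/
noncomputable def mono {K : Type} [Field K] {n : ℕ} (w : Word n) : FreeAlg K n :=
  MonoidAlgebra.single w 1

/-- The two-sided ideal of `K⟨X⟩` generated by a set of words (a monomial ideal). -/
noncomputable def monIdeal (K : Type) [Field K] {n : ℕ} (Ω : Set (Word n)) :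
    TwoSidedIdeal (FreeAlg K n) :=
  TwoSidedIdeal.span (mono '' Ω)

/-- A ring is semiprime if `a R a = 0` implies `a = 0`. -/
def IsSemiprimeRing (R : Type*) [Ring R] : Prop :=
  ∀ a : R, (∀ r : R, a * r * a = 0) → a = 0

/-- A ring is semiprimitive (Jacobson semisimple) if its Jacobson radical is zero. -/
def IsSemiprimitiveRing (R : Type*) [Ring R] : Prop :=
  (⊥ : TwoSidedIdeal R).jacobson = ⊥

/-- A monomial ordering on the words: a multiplication-compatible well-ordering. -/
structure MonOrder (n : ℕ) where
  /-- the strict order relation -/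
  lt : Word n → Word n → Prop
  trichotomous : ∀ u v : Word n, lt u v ∨ u = v ∨ lt v u
  trans : ∀ {u v w : Word n}, lt u v → lt v w → lt u w
  wf : WellFounded lt
  mul_compat : ∀ u v w s : Word n, lt u v → lt (w * u * s) (w * v * s)
  one_lt : ∀ u w s : Word n, w * u * s ≠ u → lt u (w * u * s)

/-- The leading monomial (word) of a nonzero element of `K⟨X⟩` with respect to a monomial
ordering: the `≺`-largest word in its support (and `1` by convention for `0`). -/
noncomputable def LM {K : Type} [Field K] {n : ℕ} (o : MonOrder n) (f : FreeAlg K n) :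
    Word n :=
  if h : ∃ w ∈ f.coeff.support, ∀ v ∈ f.coeff.support, v ≠ w → o.lt v w then h.choose else 1

/-- The weight degree of a word, where the letter `i` has weight `wt i`. -/
def wdeg {n : ℕ} (wt : Fin n → ℕ) (u : Word n) : ℕ :=
  (FreeMonoid.toList u |>.map wt).sum

/-- `f` is homogeneous of degree `p` with respect to the weight grading. -/
def IsHomogeneous {K : Type} [Field K] {n : ℕ} (wt : Fin n → ℕ) (f : FreeAlg K n)
    (p : ℕ) : Prop :=
  ∀ w ∈ f.coeff.support, wdeg wt w = p

/-- The (highest-degree) leading homogeneous component of `f` with respect to the weight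
grading. -/
noncomputable def LH {K : Type} [Field K] {n : ℕ} (wt : Fin n → ℕ) (f : FreeAlg K n) :
    FreeAlg K n :=
  MonoidAlgebra.ofCoeff (Finsupp.filter (fun w => wdeg wt w = f.coeff.support.sup (wdeg wt)) f.coeff)

/-- `𝒢` is a Gröbner basis of the two-sided ideal `I` w.r.t. the monomial ordering `o`:
`𝒢 ⊆ I ∖ {0}` and the leading monomials of `I` and of `𝒢` generate the same monomial
ideal. -/
def IsGrobnerBasis {K : Type} [Field K] {n : ℕ} (o : MonOrder n)
    (𝒢 : Set (FreeAlg K n)) (I : TwoSidedIdeal (FreeAlg K n)) : Prop :=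
  𝒢 ⊆ {f | f ∈ I ∧ f ≠ 0} ∧
    monIdeal K (LM o '' {f : FreeAlg K n | f ∈ I ∧ f ≠ 0}) = monIdeal K (LM o '' 𝒢)

/-!
Reduce `H` by the homogeneous Gröbner basis: if the `≺`-largest non-normal word `w` of the
current remainder `f` is `a · LM(g) · b` with `g ∈ 𝒢`, replace `f` by `f - λ a g b` with `λ`
chosen to cancel `w`. Since `g` is homogeneous, `a g b` is homogeneous of degree `p`, so the
remainder stays in degree `p`; every word it introduces is `a v b` with `v ≺ LM(g)`, hence
`≺ w`. The largest non-normal word therefore strictly decreases, so the process stops at a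
combination of normal words of degree `p`, which is nonzero because `H ∉ I`.
-/

variable {K : Type} [Field K] {n : ℕ}

lemma wdeg_mul (wt : Fin n → ℕ) (u v : Word n) :
    wdeg wt (u * v) = wdeg wt u + wdeg wt v := by
  simp [wdeg, FreeMonoid.toList_mul]

namespace MonOrder

lemma exists_max (o : MonOrder n) {s : Finset (Word n)} (hs : s.Nonempty) :
    ∃ w ∈ s, ∀ v ∈ s, v ≠ w → o.lt v w := by
  let gt : s → s → Prop := fun u v => o.lt v u
  have : IsTrans s gt := ⟨fun _ _ _ h₁ h₂ => o.trans h₂ h₁⟩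
  have : Std.Irrefl gt := ⟨fun u h => o.wf.irrefl.irrefl u h⟩
  obtain ⟨⟨w, hw⟩, -, hmax⟩ :=
    (Finite.wellFounded_of_trans_of_irrefl gt).has_min Set.univ
      ⟨⟨_, hs.choose_spec⟩, Set.mem_univ _⟩
  refine ⟨w, hw, fun v hv hvw => ?_⟩
  rcases o.trichotomous v w with h | h | h
  · exact h
  · exact absurd h hvw
  · exact absurd h (hmax ⟨v, hv⟩ (Set.mem_univ _))

lemma LM_spec (o : MonOrder n) {f : FreeAlg K n} (hf : f ≠ 0) :
    LM o f ∈ f.coeff.support ∧ ∀ v ∈ f.coeff.support, v ≠ LM o f → o.lt v (LM o f) := by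
  have hmax :=
    o.exists_max (Finsupp.support_nonempty_iff.mpr (mt MonoidAlgebra.coeff_eq_zero.mp hf))
  rw [LM, dif_pos hmax]
  exact hmax.choose_spec

end MonOrder

noncomputable def divisibleIdeal (K : Type) [Field K] (Ω : Set (Word n)) :
    TwoSidedIdeal (FreeAlg K n) :=
  TwoSidedIdeal.mk' {g : FreeAlg K n | ∀ u ∈ g.coeff.support, ∃ v ∈ Ω, WDvd v u}
    (fun u hu => by simp at hu)
    (fun {x y} hx hy u hu => by
      rw [MonoidAlgebra.coeff_add] at hu
      rcases Finset.mem_union.mp (Finsupp.support_add hu) with h | h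
      · exact hx u h
      · exact hy u h)
    (fun {x} hx u hu => hx u (by rwa [MonoidAlgebra.coeff_neg, Finsupp.support_neg] at hu))
    (fun {x y} hy u hu => by
      obtain ⟨s₁, -, s₂, hs₂, rfl⟩ :=
        Finset.mem_mul.mp (MonoidAlgebra.support_coeff_mul_subset x y hu)
      obtain ⟨v, hv, w, s, rfl⟩ := hy s₂ hs₂
      exact ⟨v, hv, s₁ * w, s, by simp [mul_assoc]⟩)
    (fun {x y} hx u hu => by
      obtain ⟨s₁, hs₁, s₂, -, rfl⟩ :=
        Finset.mem_mul.mp (MonoidAlgebra.support_coeff_mul_subset x y hu)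
      obtain ⟨v, hv, w, s, rfl⟩ := hx s₁ hs₁
      exact ⟨v, hv, w, s * s₂, by simp [mul_assoc]⟩)

lemma mem_divisibleIdeal {Ω : Set (Word n)} {f : FreeAlg K n} :
    f ∈ divisibleIdeal K Ω ↔ ∀ u ∈ f.coeff.support, ∃ v ∈ Ω, WDvd v u := by
  simp [divisibleIdeal, TwoSidedIdeal.mem_mk']

lemma monIdeal_le_divisibleIdeal (Ω : Set (Word n)) : monIdeal K Ω ≤ divisibleIdeal K Ω := by
  refine TwoSidedIdeal.span_le.mpr ?_
  rintro _ ⟨v, hv, rfl⟩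
  rw [SetLike.mem_coe, mem_divisibleIdeal]
  intro u hu
  obtain rfl : u = v := by simpa [mono, MonoidAlgebra.coeff_single] using hu
  exact ⟨u, hv, 1, 1, by simp⟩

lemma exists_wdvd_of_mono_mem_monIdeal {Ω : Set (Word n)} {u : Word n}
    (hu : mono (K := K) u ∈ monIdeal K Ω) : ∃ v ∈ Ω, WDvd v u :=
  mem_divisibleIdeal.mp (monIdeal_le_divisibleIdeal Ω hu) u
    (by simp [mono, MonoidAlgebra.coeff_single])

section Sandwich

open MonoidAlgebra

variable (a b : Word n) (c : K) (g : FreeAlg K n)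

lemma coeff_single_mul_mul_single (u : Word n) :
    (single a c * g * single b 1).coeff (a * u * b) = c * g.coeff u := by
  simp

lemma mem_support_single_mul_mul_single {w : Word n}
    (hw : w ∈ (single a c * g * single b 1).coeff.support) :
    ∃ u ∈ g.coeff.support, w = a * u * b := by
  obtain ⟨t, ht, rfl⟩ := Finset.mem_image.mp (support_coeff_mul_single_subset _ _ _ hw)
  obtain ⟨u, hu, rfl⟩ := Finset.mem_image.mp (support_coeff_single_mul_subset _ _ _ ht)
  exact ⟨u, hu, rfl⟩

lemma IsHomogeneous.single_mul_mul_single {wt : Fin n → ℕ} {q : ℕ}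
    (hg : IsHomogeneous wt g q) :
    IsHomogeneous wt (single a c * g * single b 1) (wdeg wt a + q + wdeg wt b) := by
  intro w hw
  obtain ⟨u, hu, rfl⟩ := mem_support_single_mul_mul_single a b c g hw
  rw [wdeg_mul, wdeg_mul, hg u hu]

end Sandwich

lemma IsHomogeneous.sub {wt : Fin n → ℕ} {f g : FreeAlg K n} {p : ℕ}
    (hf : IsHomogeneous wt f p) (hg : IsHomogeneous wt g p) : IsHomogeneous wt (f - g) p := by
  intro w hw
  rw [MonoidAlgebra.coeff_sub] at hw
  rcases Finset.mem_union.mp (Finsupp.support_sub hw) with h | h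
  · exact hf w h
  · exact hg w h

lemma exists_reduction_of_LM_dvd {wt : Fin n → ℕ} (o : MonOrder n)
    {I : TwoSidedIdeal (FreeAlg K n)} {g : FreeAlg K n} (hgI : g ∈ I) (hg0 : g ≠ 0) {q : ℕ}
    (hg : IsHomogeneous wt g q) {f : FreeAlg K n} {p : ℕ} (hf : IsHomogeneous wt f p)
    {a b : Word n}
    (hw : a * LM o g * b ∈ f.coeff.support) :
    ∃ f' : FreeAlg K n, f - f' ∈ I ∧ IsHomogeneous wt f' p ∧
      a * LM o g * b ∉ f'.coeff.support ∧
      ∀ u ∈ f'.coeff.support, u ∈ f.coeff.support ∨ o.lt u (a * LM o g * b) := by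
  obtain ⟨hLM, hlt⟩ := o.LM_spec hg0
  set w := a * LM o g * b
  have hd : g.coeff (LM o g) ≠ 0 := Finsupp.mem_support_iff.mp hLM
  set r :=
    MonoidAlgebra.single a (f.coeff w / g.coeff (LM o g)) * g * MonoidAlgebra.single b 1
  have hr_deg : IsHomogeneous wt r p := by
    have hdeg : wdeg wt a + q + wdeg wt b = p := by
      rw [← hg _ hLM, ← wdeg_mul, ← wdeg_mul]
      exact hf _ hw
    exact hdeg ▸ hg.single_mul_mul_single a b _
  refine ⟨f - r, ?_, hf.sub hr_deg, ?_, fun u hu => ?_⟩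
  · rw [sub_sub_cancel]
    exact I.mul_mem_right _ _ (I.mul_mem_left _ _ hgI)
  · rw [Finsupp.notMem_support_iff, MonoidAlgebra.coeff_sub, Finsupp.sub_apply,
      coeff_single_mul_mul_single, div_mul_cancel₀ _ hd, sub_self]
  · rw [MonoidAlgebra.coeff_sub] at hu
    rcases Finset.mem_union.mp (Finsupp.support_sub hu) with huf | hur
    · exact Or.inl huf
    obtain ⟨v, hv, rfl⟩ := mem_support_single_mul_mul_single _ _ _ _ hur
    by_cases hvL : v = LM o g
    · exact Or.inl (hvL ▸ hw)
    · exact Or.inr (o.mul_compat _ _ a b (hlt v hv hvL))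

noncomputable def leadingMonIdeal (K : Type) [Field K] (o : MonOrder n)
    (I : TwoSidedIdeal (FreeAlg K n)) : TwoSidedIdeal (FreeAlg K n) :=
  monIdeal K (LM o '' {h : FreeAlg K n | h ∈ I ∧ h ≠ 0})

section GrobnerReduction

variable {wt : Fin n → ℕ} {o : MonOrder n} {I : TwoSidedIdeal (FreeAlg K n)}
  {𝒢 : Set (FreeAlg K n)}

lemma exists_reduction_below_max_nonnormal (hGB : IsGrobnerBasis o 𝒢 I)
    (hhom : ∀ g ∈ 𝒢, ∃ q : ℕ, IsHomogeneous wt g q) {f : FreeAlg K n} {p : ℕ}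
    (hf : IsHomogeneous wt f p)
    (hbad : ∃ u ∈ f.coeff.support, mono u ∈ leadingMonIdeal K o I) :
    ∃ m ∈ f.coeff.support, mono m ∈ leadingMonIdeal K o I ∧
      ∃ f' : FreeAlg K n, f - f' ∈ I ∧ IsHomogeneous wt f' p ∧
        ∀ u ∈ f'.coeff.support, mono u ∈ leadingMonIdeal K o I → o.lt u m := by
  obtain ⟨m, hm, hmax⟩ := o.exists_max (s := f.coeff.support.filter
    (fun u => mono u ∈ leadingMonIdeal K o I)) (by simpa [Finset.Nonempty] using hbad)
  rw [Finset.mem_filter] at hm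
  have hm_dvd := hm.2
  rw [leadingMonIdeal, hGB.2] at hm_dvd
  obtain ⟨_, ⟨g, hg𝒢, rfl⟩, a, b, rfl⟩ := exists_wdvd_of_mono_mem_monIdeal hm_dvd
  obtain ⟨q, hg⟩ := hhom g hg𝒢
  obtain ⟨f', hff', hf', hm', hsupp⟩ :=
    exists_reduction_of_LM_dvd o (hGB.1 hg𝒢).1 (hGB.1 hg𝒢).2 hg hf hm.1
  refine ⟨_, hm.1, hm.2, f', hff', hf', fun u hu hu_bad => ?_⟩
  have hum : u ≠ a * LM o g * b := by rintro rfl; exact hm' hu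
  exact (hsupp u hu).elim (fun huf => hmax u (Finset.mem_filter.mpr ⟨huf, hu_bad⟩) hum) id

lemma exists_normal_form_of_nonnormal_lt (hGB : IsGrobnerBasis o 𝒢 I)
    (hhom : ∀ g ∈ 𝒢, ∃ q : ℕ, IsHomogeneous wt g q) {f : FreeAlg K n} {p : ℕ}
    (hf : IsHomogeneous wt f p) (w : Word n)
    (hlt : ∀ u ∈ f.coeff.support, mono u ∈ leadingMonIdeal K o I → o.lt u w) :
    ∃ r : FreeAlg K n, IsHomogeneous wt r p ∧
      (∀ u ∈ r.coeff.support, mono u ∉ leadingMonIdeal K o I) ∧ f - r ∈ I := by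
  induction w using o.wf.induction generalizing f with
  | _ w ih =>
  by_cases hbad : ∃ u ∈ f.coeff.support, mono u ∈ leadingMonIdeal K o I
  · obtain ⟨m, hm, hm_bad, f', hff', hf', hlt'⟩ :=
      exists_reduction_below_max_nonnormal hGB hhom hf hbad
    obtain ⟨r, hr, hr_normal, hf'r⟩ := ih m (hlt m hm hm_bad) hf' hlt'
    exact ⟨r, hr, hr_normal, by simpa using I.add_mem hff' hf'r⟩
  · exact ⟨f, hf, fun u hu hu_bad => hbad ⟨u, hu, hu_bad⟩, by simp⟩

lemma exists_normal_form (hGB : IsGrobnerBasis o 𝒢 I)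
    (hhom : ∀ g ∈ 𝒢, ∃ q : ℕ, IsHomogeneous wt g q) {f : FreeAlg K n} {p : ℕ}
    (hf : IsHomogeneous wt f p) :
    ∃ r : FreeAlg K n, IsHomogeneous wt r p ∧
      (∀ u ∈ r.coeff.support, mono u ∉ leadingMonIdeal K o I) ∧ f - r ∈ I := by
  by_cases hbad : ∃ u ∈ f.coeff.support, mono u ∈ leadingMonIdeal K o I
  · obtain ⟨m, -, -, f', hff', hf', hlt'⟩ :=
      exists_reduction_below_max_nonnormal hGB hhom hf hbad
    obtain ⟨r, hr, hr_normal, hf'r⟩ := exists_normal_form_of_nonnormal_lt hGB hhom hf' m hlt'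
    exact ⟨r, hr, hr_normal, by simpa using I.add_mem hff' hf'r⟩
  · exact ⟨f, hf, fun u hu hu_bad => hbad ⟨u, hu, hu_bad⟩, by simp⟩

end GrobnerReduction

theorem homogeneous_normal_form_general {K : Type} [Field K] {n : ℕ}
    (wt : Fin n → ℕ) (o : MonOrder n)
    (I : TwoSidedIdeal (FreeAlg K n))
    (𝒢 : Set (FreeAlg K n)) (hGB : IsGrobnerBasis o 𝒢 I)
    (hhom : ∀ g ∈ 𝒢, ∃ p : ℕ, IsHomogeneous wt g p)
    (H : FreeAlg K n) (p : ℕ) (hH : IsHomogeneous wt H p)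
    (hHI : H ∉ I) :
    ∃ f : FreeAlg K n, f ≠ 0 ∧
      (∀ w ∈ f.coeff.support, wdeg wt w = p ∧
        mono (K := K) w ∉ monIdeal K (LM o '' {h : FreeAlg K n | h ∈ I ∧ h ≠ 0})) ∧
      H - f ∈ I := by
  obtain ⟨f, hf, hf_normal, hHf⟩ := exists_normal_form hGB hhom hH
  refine ⟨f, ?_, fun w hw => ⟨hf w hw, hf_normal w hw⟩, hHf⟩
  rintro rfl
  exact hHI (by simpa using hHf)

/-- Let `I` be a graded two-sided ideal of the weight `ℕ`-graded free algebra `K⟨X⟩`, with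
a homogeneous Gröbner basis `𝒢` w.r.t. a monomial ordering `≺`.  Every nonzero homogeneous
element `H` of degree `p` with `H ∉ I` is congruent modulo `I` to a nonzero `K`-linear
combination of normal words of degree `p`. -/
theorem homogeneous_normal_form {K : Type} [Field K] {n : ℕ}
    (wt : Fin n → ℕ) (hwt : ∀ i, 0 < wt i) (o : MonOrder n)
    (I : TwoSidedIdeal (FreeAlg K n))
    (hgraded : ∀ f ∈ I, ∀ p : ℕ, MonoidAlgebra.ofCoeff (Finsupp.filter (fun w => wdeg wt w = p) f.coeff) ∈ I)
    (𝒢 : Set (FreeAlg K n)) (hGB : IsGrobnerBasis o 𝒢 I)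
    (hhom : ∀ g ∈ 𝒢, ∃ p : ℕ, IsHomogeneous wt g p)
    (H : FreeAlg K n) (p : ℕ) (hH : IsHomogeneous wt H p)
    (hH0 : H ≠ 0) (hHI : H ∉ I) :
    ∃ f : FreeAlg K n, f ≠ 0 ∧
      (∀ w ∈ f.coeff.support, wdeg wt w = p ∧
        mono (K := K) w ∉ monIdeal K (LM o '' {h : FreeAlg K n | h ∈ I ∧ h ≠ 0})) ∧
      H - f ∈ I :=
  homogeneous_normal_form_general wt o I 𝒢 hGB hhom H p hH hHI
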